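/- arXiv:1610.02965 — 2 statements merged into one kernel-verified Lean document; each statement's English description precedes it below -/
import Mathlib

section
/- For nonnegative integers n, k with 0 ≤ k ≤ n, the Stirling number of the second kind satisfies S2(n,k) = (-1)^{n-k} · Σ_{j=0}^{n-k} (-1)^j · C(n-1+j, n-k+j) · C(2n-k, n-k-j) · S1(n-k+j, j), where S1 denotes the unsigned Stirling number of the first kind. -/
/-- Unsigned Stirling numbers of the first kind. -/
def S1 : ℕ → ℕ → ℕ
  | 0, 0 => 1
  | 0, _ + 1 => 0
  | _ + 1, 0 => 0
  | n + 1, k + 1 => n * S1 n (k + 1) + S1 n k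

/-- Stirling numbers of the second kind. -/
def S2 : ℕ → ℕ → ℕ
  | 0, 0 => 1
  | 0, _ + 1 => 0
  | _ + 1, 0 => 0
  | n + 1, k + 1 => (k + 1) * S2 n (k + 1) + S2 n k

/-!
For fixed `m`, the numbers `S1 (m + k) k` and `S2 (m + k) k` are the values at `x = m + k` and
at `x = -k` of one function `p_m = stirlingPoly m : ℤ → ℤ`, defined by `p_0 = 1`,
`Δ p_{m+1} x = x p_m x` and `p_{m+1} 0 = 0`. It is a polynomial of degree at most `2m` vanishing
at `0, …, m - 1`, so Lagrange interpolation at the nodes `0, …, 2m` writes `p_m (-k)` through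
`p_m (m + j)`, `j ≤ m`. The Lagrange weight of the node `m + j` at `-k` is
`C(-k, m + j) C(2m + k, m - j) = (-1)^(m + j) C(m + k - 1 + j, m + j) C(2m + k, m - j)`,
which is Gould's identity for `n = m + k`.
-/

open Finset fwdDiff

lemma Ring.sum_choose_mul_choose_mul_choose {R : Type*} [CommRing R] [BinomialRing R] (x : R)
    {D i : ℕ} (hi : i ≤ D) :
    ∑ t ∈ range (D + 1), choose x t * choose (D - x) (D - t) * (t.choose i : R) = choose x i := by
  obtain ⟨S, rfl⟩ := Nat.exists_eq_add_of_le hi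
  have hvandermonde :
      ∑ u ∈ range (S + 1), choose (x - i) u * choose ((i + S : ℕ) - x) (S - u) = 1 := by
    have := add_choose_eq S (Commute.all (x - i) ((i + S : ℕ) - x))
    rw [Nat.sum_antidiagonal_eq_sum_range_succ_mk] at this
    rw [← this, show x - i + ((i + S : ℕ) - x) = (S : ℕ) by push_cast; ring, choose_natCast,
      Nat.choose_self, Nat.cast_one]
  rw [show i + S + 1 = i + (S + 1) by ring, sum_range_add, sum_eq_zero fun t ht ↦ by
    rw [Nat.choose_eq_zero_of_lt (mem_range.mp ht), Nat.cast_zero, mul_zero], zero_add,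
    ← mul_one (choose x i), ← hvandermonde, mul_sum]
  refine sum_congr rfl fun u _ ↦ ?_
  have := choose_smul_choose x (Nat.le_add_right i u)
  rw [nsmul_eq_mul, Nat.add_sub_cancel_left] at this
  rw [show i + S - (i + u) = S - u by omega]
  linear_combination choose ((i + S : ℕ) - x) (S - u) * this

lemma Ring.choose_neg_natCast (k i : ℕ) :
    Ring.choose (-(k : ℤ)) i = (-1) ^ i * ((k + i - 1).choose i : ℤ) := by
  rcases Nat.eq_zero_or_pos (k + i) with h | h
  · obtain ⟨rfl, rfl⟩ : k = 0 ∧ i = 0 := by omega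
    simp
  · rw [Ring.choose_neg, show (k : ℤ) + i - 1 = (k + i - 1 : ℕ) by omega, Ring.choose_natCast,
      Units.smul_def, Int.negOnePow_def]
    simp

section FwdDiffInt

variable {G : Type*} [AddCommGroup G]

noncomputable def indefiniteSum (f : ℤ → G) (x : ℤ) : G :=
  ∑ t ∈ Ico 0 x, f t - ∑ t ∈ Ico x 0, f t

@[simp] lemma indefiniteSum_zero (f : ℤ → G) : indefiniteSum f 0 = 0 := by
  simp [indefiniteSum]

lemma fwdDiff_indefiniteSum (f : ℤ → G) : Δ_[1] (indefiniteSum f) = f := by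
  ext x
  rcases le_or_gt 0 x with hx | hx
  · rw [fwdDiff, indefiniteSum, indefiniteSum, ← insert_Ico_right_eq_Ico_add_one hx,
      sum_insert (by simp), Ico_eq_empty_of_le (show 0 ≤ x + 1 by omega), Ico_eq_empty_of_le hx]
    abel
  · rw [fwdDiff, indefiniteSum, indefiniteSum, ← insert_Ico_add_one_left_eq_Ico hx,
      sum_insert (by simp), Ico_eq_empty_of_le (show x + 1 ≤ 0 by omega),
      Ico_eq_empty_of_le hx.le]
    abel

lemma Int.eq_of_fwdDiff_eq {f g : ℤ → G} (hΔ : Δ_[1] f = Δ_[1] g) (h0 : f 0 = g 0) :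
    f = g := by
  ext x
  induction x using Int.induction_on with
  | zero => exact h0
  | succ i ih => simpa [fwdDiff, ih] using congr_fun hΔ i
  | pred i ih => simpa [fwdDiff, ih] using congr_fun hΔ (-i - 1)

lemma fwdDiff_ringChoose (i : ℕ) :
    Δ_[1] (fun x : ℤ ↦ Ring.choose x (i + 1)) = fun x ↦ Ring.choose x i := by
  ext x
  simp [fwdDiff, Ring.choose_succ_succ]

lemma Int.eq_sum_choose_smul_fwdDiff_iter {D : ℕ} {f : ℤ → G} (hf : Δ_[1] ^[D] f = 0)
    (x : ℤ) :
    f x = ∑ i ∈ Finset.range D, Ring.choose x i • Δ_[1] ^[i] f 0 := by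
  induction D generalizing f x with
  | zero => simpa using congr_fun hf x
  | succ D ih =>
    suffices f = fun y ↦ ∑ i ∈ Finset.range (D + 1), Ring.choose y i • Δ_[1] ^[i] f 0 from
      congr_fun this x
    refine Int.eq_of_fwdDiff_eq ?_ (by simp [sum_range_succ'])
    ext y
    rw [ih (f := Δ_[1] f) hf y]
    simp only [fwdDiff, sum_range_succ' _ D, Ring.choose_succ_succ, Ring.choose_zero_right,
      add_smul, sum_add_distrib, Function.iterate_succ_apply]
    abel

-- Lagrange interpolation at the nodes `0, …, D`: the weight of the node `t` at `x` is
-- `C(x, t) C(D - x, D - t)`.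
lemma Int.eq_sum_choose_mul_choose_smul {D : ℕ} {f : ℤ → G} (hf : Δ_[1] ^[D + 1] f = 0)
    (x : ℤ) :
    f x = ∑ t ∈ Finset.range (D + 1), (Ring.choose x t * Ring.choose (D - x) (D - t)) • f t := by
  simp_rw [Int.eq_sum_choose_smul_fwdDiff_iter hf, smul_sum, smul_smul, Ring.choose_natCast]
  rw [sum_comm]
  refine sum_congr rfl fun i hi ↦ ?_
  rw [← sum_smul,
    Ring.sum_choose_mul_choose_mul_choose x (Nat.lt_succ_iff.mp (mem_range.mp hi))]

end FwdDiffInt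

lemma fwdDiff_iter_succ_intCast_mul {R : Type*} [CommRing R] (g : ℤ → R) (r : ℕ) (x : ℤ) :
    Δ_[1] ^[r + 1] (fun y ↦ y * g y) x =
      x * Δ_[1] ^[r + 1] g x + (r + 1) * Δ_[1] ^[r] g (x + 1) := by
  induction r generalizing x with
  | zero =>
    simp only [zero_add, Function.iterate_one, Function.iterate_zero, id, fwdDiff]
    push_cast
    ring
  | succ r ih =>
    rw [Function.iterate_succ_apply', fwdDiff, ih, ih]
    simp only [Function.iterate_succ_apply', fwdDiff]
    push_cast
    ring

lemma S1_eq_zero_of_lt : ∀ {n k : ℕ}, n < k → S1 n k = 0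
  | 0, _ + 1, _ => rfl
  | n + 1, k + 1, h => by
    rw [S1, S1_eq_zero_of_lt (by omega : n < k + 1), S1_eq_zero_of_lt (by omega : n < k), mul_zero]

lemma S2_eq_zero_of_lt : ∀ {n k : ℕ}, n < k → S2 n k = 0
  | 0, _ + 1, _ => rfl
  | n + 1, k + 1, h => by
    rw [S2, S2_eq_zero_of_lt (by omega : n < k + 1), S2_eq_zero_of_lt (by omega : n < k), mul_zero]

lemma S1_self : ∀ n, S1 n n = 1
  | 0 => rfl
  | n + 1 => by rw [S1, S1_self n, S1_eq_zero_of_lt (Nat.lt_succ_self n), mul_zero]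

lemma S2_self : ∀ n, S2 n n = 1
  | 0 => rfl
  | n + 1 => by rw [S2, S2_self n, S2_eq_zero_of_lt (Nat.lt_succ_self n), mul_zero]

noncomputable def stirlingPoly : ℕ → ℤ → ℤ
  | 0 => 1
  | m + 1 => indefiniteSum fun x ↦ x * stirlingPoly m x

lemma fwdDiff_stirlingPoly_succ (m : ℕ) :
    Δ_[1] (stirlingPoly (m + 1)) = fun x ↦ x * stirlingPoly m x :=
  fwdDiff_indefiniteSum _

@[simp] lemma stirlingPoly_succ_zero (m : ℕ) : stirlingPoly (m + 1) 0 = 0 :=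
  indefiniteSum_zero _

lemma stirlingPoly_succ_add_one (m : ℕ) (x : ℤ) :
    stirlingPoly (m + 1) (x + 1) = stirlingPoly (m + 1) x + x * stirlingPoly m x := by
  rw [← congr_fun (fwdDiff_stirlingPoly_succ m) x, fwdDiff, add_sub_cancel]

lemma stirlingPoly_natCast_of_lt {m n : ℕ} (h : n < m) : stirlingPoly m n = 0 := by
  induction n generalizing m with
  | zero => obtain ⟨m, rfl⟩ := Nat.exists_eq_succ_of_ne_zero h.ne'; simp
  | succ n ih =>
    obtain ⟨m, rfl⟩ := Nat.exists_eq_succ_of_ne_zero (Nat.ne_zero_of_lt h)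
    rw [Nat.cast_succ, stirlingPoly_succ_add_one, ih (by omega), ih (by omega), mul_zero, add_zero]

lemma stirlingPoly_natCast_add (m k : ℕ) : stirlingPoly m (m + k : ℕ) = S1 (m + k) k := by
  induction m generalizing k with
  | zero => simp [stirlingPoly, S1_self]
  | succ m ih =>
    induction k with
    | zero =>
      have hm : stirlingPoly m m = S1 m 0 := by simpa using ih 0
      rw [add_zero, Nat.cast_succ, stirlingPoly_succ_add_one,
        stirlingPoly_natCast_of_lt m.lt_succ_self, hm]
      cases m <;> simp [S1]
    | succ k ihk =>
      rw [show m + 1 + (k + 1) = m + 1 + k + 1 by ring, Nat.cast_succ, stirlingPoly_succ_add_one,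
        ihk, show m + 1 + k = m + (k + 1) by ring, ih, S1]
      push_cast
      ring

lemma stirlingPoly_neg_natCast (m k : ℕ) : stirlingPoly m (-k) = S2 (m + k) k := by
  induction m generalizing k with
  | zero => simp [stirlingPoly, S2_self]
  | succ m ih =>
    induction k with
    | zero => simp [S2]
    | succ k ihk =>
      have step := stirlingPoly_succ_add_one m (-(k + 1 : ℕ))
      rw [show -((k + 1 : ℕ) : ℤ) + 1 = -k by push_cast; ring, ihk, ih,
        show m + (k + 1) = m + 1 + k by ring] at step
      rw [show m + 1 + (k + 1) = m + 1 + k + 1 by ring, S2]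
      push_cast at step ⊢
      linarith

lemma fwdDiff_iter_stirlingPoly (m : ℕ) : Δ_[1] ^[2 * m + 1] (stirlingPoly m) = 0 := by
  induction m with
  | zero => ext x; simp [stirlingPoly, fwdDiff]
  | succ m ih =>
    have ih' : Δ_[1] ^[2 * m + 2] (stirlingPoly m) = 0 := by
      rw [Function.iterate_succ_apply', ih]; ext; simp [fwdDiff]
    ext x
    have := fwdDiff_iter_succ_intCast_mul (stirlingPoly m) (2 * m + 1) x
    simp only [Int.cast_id] at this
    rw [show 2 * (m + 1) + 1 = 2 * m + 1 + 1 + 1 by ring, Function.iterate_succ_apply,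
      fwdDiff_stirlingPoly_succ, this, ih', ih]
    simp

theorem gould_identity (n k : ℕ) (hkn : k ≤ n) :
    (S2 n k : ℤ) = (-1) ^ (n - k) *
      ∑ j ∈ Finset.range (n - k + 1), (-1 : ℤ) ^ j *
        ((n - 1 + j).choose (n - k + j)) * ((2 * n - k).choose (n - k - j)) *
        S1 (n - k + j) j := by
  obtain ⟨m, rfl⟩ := Nat.exists_eq_add_of_le' hkn
  rw [Nat.add_sub_cancel, ← stirlingPoly_neg_natCast,
    Int.eq_sum_choose_mul_choose_smul (fwdDiff_iter_stirlingPoly m),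
    show 2 * m + 1 = m + (m + 1) by ring, sum_range_add,
    sum_eq_zero fun t ht ↦ by rw [stirlingPoly_natCast_of_lt (mem_range.mp ht), smul_zero],
    zero_add, mul_sum]
  refine sum_congr rfl fun j hj ↦ ?_
  have hjm : j ≤ m := Nat.lt_succ_iff.mp (mem_range.mp hj)
  rw [stirlingPoly_natCast_add, Ring.choose_neg_natCast,
    show k + (m + j) - 1 = m + k - 1 + j by omega,
    show ((2 * m : ℕ) : ℤ) - -(k : ℤ) = ((2 * (m + k) - k : ℕ) : ℤ) by omega,
    show 2 * m - (m + j) = m - j by omega, Ring.choose_natCast, smul_eq_mul, pow_add]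
  ring
end

section
/- Define B^{n,k}_{i,j} = C(n+j-1, k-1)·C(n-i-1, k-1) − C(n+j, k-1)·C(n-i-2, k-1). Then for nonnegative integers n, k, i, j with appropriate ranges, −B^{n+1,k+1}_{i,j-1} + B^{n+1,k+1}_{i,j} + B^{n+1,k+1}_{i+1,j-1} − B^{n+1,k+1}_{i+1,j} = B^{n,k}_{i,j}. -/
/-!
Write `B^{n,k}_{i,j}` as the minor `C(x,m) C(y,m) - C(x+1,m) C(y-1,m)` with `m = k - 1`,
`x = n + j - 1`, `y = n - i - 1`. The left-hand side is then a mixed second difference in `x`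
and `y` of the minor at level `m + 1`. Pascal's rule, which holds for every integer top entry
under the conventions of `icho` as long as the bottom entry is nonnegative, lowers the level to
`m` and reduces the claim to a polynomial identity.
-/

/-- Binomial coefficient for integer arguments: `icho a b = C(a,b)`, equal to `0`
when `b < 0` (unless `a = b`, where it is `1`, matching the conventions
`C(-1,-1) = C(-2,-2) = 1`) or `b > a`. -/
def icho (a b : ℤ) : ℤ :=
  if 0 ≤ b then (if b ≤ a then (a.toNat.choose b.toNat : ℤ) else 0)
  else if a = b then 1 else 0

/-- The coefficients `B^{n,k}_{i,j}`. -/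
def B (n k i j : ℤ) : ℤ :=
  icho (n + j - 1) (k - 1) * icho (n - i - 1) (k - 1) -
    icho (n + j) (k - 1) * icho (n - i - 2) (k - 1)

lemma icho_natCast (p m : ℕ) : icho p m = p.choose m := by
  by_cases h : m ≤ p
  · simp [icho, h]
  · simp [icho, h, Nat.choose_eq_zero_of_lt (not_le.mp h)]

lemma icho_of_lt {a b : ℤ} (h : a < b) (hb : 0 ≤ b) : icho a b = 0 := by
  simp [icho, hb, not_le.mpr h]

lemma icho_add_one {a k : ℤ} (hk : 0 ≤ k) :
    icho (a + 1) k = icho a k + icho a (k - 1) := by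
  lift k to ℕ using hk
  rcases k with _ | k
  · unfold icho; split_ifs <;> simp_all <;> omega
  rcases lt_or_ge a 0 with ha | ha
  · rw [icho_of_lt (by omega) (by omega), icho_of_lt (by omega) (by omega),
      icho_of_lt (by omega) (by omega), add_zero]
  lift a to ℕ using ha
  rw [show ((k + 1 : ℕ) : ℤ) - 1 = k by push_cast; ring, ← Nat.cast_succ, icho_natCast,
    icho_natCast, icho_natCast, Nat.choose_succ_succ, Nat.cast_add, add_comm]

def binomMinor (m x y : ℤ) : ℤ :=
  icho x m * icho y m - icho (x + 1) m * icho (y - 1) m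

lemma B_eq_binomMinor (n k i j : ℤ) :
    B n k i j = binomMinor (k - 1) (n + j - 1) (n - i - 1) := by
  unfold B binomMinor; ring_nf

lemma binomMinor_mixed_diff {m : ℤ} (hm : 0 ≤ m) (x y : ℤ) :
    -binomMinor m (x - 1) y + binomMinor m x y + binomMinor m (x - 1) (y - 1) -
      binomMinor m x (y - 1) = binomMinor (m - 1) (x - 1) (y - 1) := by
  unfold binomMinor
  -- substitute Pascal's rule for `C(x+1,m)`, `C(x,m)`, `C(y,m)` and `C(y-1,m)`, in this order
  linear_combination (norm := ring_nf)
    (icho (y - 2) m - icho (y - 1) m) * icho_add_one (a := x) hm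
    + icho (y - 1) (m - 1) * icho_add_one (a := x - 1) hm
    + (icho x m - icho (x - 1) m) * icho_add_one (a := y - 1) hm
    - icho x (m - 1) * icho_add_one (a := y - 2) hm

theorem rel4B_general (n k i j : ℤ) (hk : 0 ≤ k) :
    -B (n + 1) (k + 1) i (j - 1) + B (n + 1) (k + 1) i j +
      B (n + 1) (k + 1) (i + 1) (j - 1) - B (n + 1) (k + 1) (i + 1) j = B n k i j := by
  simp only [B_eq_binomMinor, add_sub_cancel_right]
  convert binomMinor_mixed_diff hk (n + j) (n - i) using 3 <;> ring_nf

theorem rel4B (n k i j : ℤ) (hj : 0 ≤ j) (hji : j ≤ i) (hik : i ≤ n - k)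
    (hk : 0 ≤ k) (hkn : k ≤ n) :
    -B (n + 1) (k + 1) i (j - 1) + B (n + 1) (k + 1) i j +
      B (n + 1) (k + 1) (i + 1) (j - 1) - B (n + 1) (k + 1) (i + 1) j = B n k i j :=
  rel4B_general n k i j hk
end
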